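/- arXiv:2112.12565 — 2 statements merged into one kernel-verified Lean document; each statement's English description precedes it below -/
import Mathlib

section
/- Let f : R → T be a surjective graded homomorphism of G-graded rings. If P is a graded weakly 2-absorbing ideal of R with Ker(f) ⊆ P, then f(P) is a graded weakly 2-absorbing ideal of T. -/
variable {G R T : Type*} [AddGroup G] [DecidableEq G] [Ring R] [Ring T]

/-- `x` is a homogeneous element of the graded ring. -/
def IsHomog {S : Type*} [Ring S] (𝒜 : G → AddSubgroup S) (x : S) : Prop := ∃ g, x ∈ 𝒜 g

/-- A two-sided ideal is graded if it contains all homogeneous components of its elements. -/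
def IsGradedIdeal {S : Type*} [Ring S] (𝒜 : G → AddSubgroup S) [GradedRing 𝒜]
    (P : TwoSidedIdeal S) : Prop :=
  ∀ a ∈ P, ∀ g : G, (DirectSum.decompose 𝒜 a g : S) ∈ P

/-- Graded weakly 2-absorbing: a proper graded ideal `P` such that for homogeneous `x, y, z`,
`0 ≠ xSySz ⊆ P` implies `xy ∈ P` or `yz ∈ P` or `xz ∈ P`. -/
def IsGradedWeakly2Absorbing {S : Type*} [Ring S] (𝒜 : G → AddSubgroup S) [GradedRing 𝒜]
    (P : TwoSidedIdeal S) : Prop :=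
  P ≠ ⊤ ∧ IsGradedIdeal 𝒜 P ∧
    ∀ x y z : S, IsHomog 𝒜 x → IsHomog 𝒜 y → IsHomog 𝒜 z →
      (∃ r s : S, x * r * y * s * z ≠ 0) → (∀ r s : S, x * r * y * s * z ∈ P) →
      x * y ∈ P ∨ y * z ∈ P ∨ x * z ∈ P

/-! Every homogeneous element of `T` lifts to a homogeneous element of `R` of the same degree
(take the matching component of any preimage), and since `Ker f ⊆ P` an element of `R` lies in
`P` as soon as its image lies in `f(P)`. So the condition `0 ≠ xTyTz ⊆ f(P)` on homogeneous
`x, y, z` pulls back to `0 ≠ aRbRc ⊆ P` for homogeneous lifts `a, b, c`, and the conclusion for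
`P` pushes forward to `f(P)`. -/

section GradedAddHom

variable {ι M N F : Type*} [DecidableEq ι] [AddCommGroup M] [AddCommGroup N]
  [FunLike F M N] [AddMonoidHomClass F M N]
  (𝒜 : ι → AddSubgroup M) [DirectSum.Decomposition 𝒜]
  (ℬ : ι → AddSubgroup N) [DirectSum.Decomposition ℬ] {f : F}

theorem decompose_map_apply (hf : ∀ i, ∀ x ∈ 𝒜 i, f x ∈ ℬ i) (m : M) (i : ι) :
    (DirectSum.decompose ℬ (f m) i : N) = f (DirectSum.decompose 𝒜 m i : M) := by
  induction m using DirectSum.Decomposition.inductionOn 𝒜 with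
  | zero => simp
  | @homogeneous j m =>
    by_cases h : i = j
    · subst h
      rw [DirectSum.decompose_of_mem_same 𝒜 m.2, DirectSum.decompose_of_mem_same ℬ (hf i m.1 m.2)]
    · rw [DirectSum.decompose_of_mem_ne 𝒜 m.2 (Ne.symm h),
        DirectSum.decompose_of_mem_ne ℬ (hf j m.1 m.2) (Ne.symm h), map_zero]
  | add a b ha hb => simp [DirectSum.add_apply, ha, hb]

theorem exists_mem_map_eq_of_surjective (hf : ∀ i, ∀ x ∈ 𝒜 i, f x ∈ ℬ i)
    (hsurj : Function.Surjective f) {i : ι} {y : N} (hy : y ∈ ℬ i) : ∃ x ∈ 𝒜 i, f x = y := by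
  obtain ⟨x, rfl⟩ := hsurj y
  refine ⟨DirectSum.decompose 𝒜 x i, SetLike.coe_mem _, ?_⟩
  rw [← decompose_map_apply 𝒜 ℬ hf, DirectSum.decompose_of_mem_same ℬ hy]

end GradedAddHom

section ImageIdeal

variable {f : R →+* T} {P : TwoSidedIdeal R} {Q : TwoSidedIdeal T}

theorem mem_of_map_mem (hQ : ∀ q, q ∈ Q ↔ ∃ p ∈ P, f p = q)
    (hker : ∀ x : R, f x = 0 → x ∈ P) {a : R} (ha : f a ∈ Q) : a ∈ P := by
  obtain ⟨p, hp, hfp⟩ := (hQ _).mp ha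
  have hdiff : a - p ∈ P := hker _ (by rw [map_sub, hfp, sub_self])
  simpa using P.add_mem hdiff hp

theorem ne_top_of_map (hQ : ∀ q, q ∈ Q ↔ ∃ p ∈ P, f p = q)
    (hker : ∀ x : R, f x = 0 → x ∈ P) (hP : P ≠ ⊤) : Q ≠ ⊤ := by
  intro hQtop
  apply hP
  rw [← TwoSidedIdeal.one_mem_iff] at hQtop ⊢
  exact mem_of_map_mem hQ hker (by rwa [map_one])

theorem isGradedIdeal_of_map (𝒜 : G → AddSubgroup R) [GradedRing 𝒜]
    (ℬ : G → AddSubgroup T) [GradedRing ℬ] (hf : ∀ g : G, ∀ x ∈ 𝒜 g, f x ∈ ℬ g)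
    (hQ : ∀ q, q ∈ Q ↔ ∃ p ∈ P, f p = q) (hP : IsGradedIdeal 𝒜 P) : IsGradedIdeal ℬ Q := by
  intro q hq g
  obtain ⟨p, hp, rfl⟩ := (hQ q).mp hq
  rw [decompose_map_apply 𝒜 ℬ hf]
  exact (hQ _).mpr ⟨_, hP p hp g, rfl⟩

end ImageIdeal

/-- If `f : R → T` is a surjective graded homomorphism, `P` is a graded weakly 2-absorbing
ideal of `R` and `Ker(f) ⊆ P`, then `f(P)` is a graded weakly 2-absorbing ideal of `T`. -/
theorem stmt8 (𝒜 : G → AddSubgroup R) [GradedRing 𝒜] (ℬ : G → AddSubgroup T) [GradedRing ℬ]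
    (f : R →+* T) (hf : ∀ g : G, ∀ x ∈ 𝒜 g, f x ∈ ℬ g) (hsurj : Function.Surjective f)
    (P : TwoSidedIdeal R) (hP : IsGradedWeakly2Absorbing 𝒜 P)
    (hker : ∀ x : R, f x = 0 → x ∈ P)
    (Q : TwoSidedIdeal T) (hQ : ∀ q, q ∈ Q ↔ ∃ p ∈ P, f p = q) :
    IsGradedWeakly2Absorbing ℬ Q := by
  obtain ⟨hPne, hPgr, hPabs⟩ := hP
  have lift : ∀ y, IsHomog ℬ y → ∃ x, IsHomog 𝒜 x ∧ f x = y := fun y ⟨g, hy⟩ ↦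
    let ⟨x, hx, hfx⟩ := exists_mem_map_eq_of_surjective 𝒜 ℬ hf hsurj hy
    ⟨x, ⟨g, hx⟩, hfx⟩
  refine ⟨ne_top_of_map hQ hker hPne, isGradedIdeal_of_map 𝒜 ℬ hf hQ hPgr, ?_⟩
  rintro x y z hx hy hz ⟨r₀, s₀, hne⟩ hall
  obtain ⟨a, ha, rfl⟩ := lift x hx
  obtain ⟨b, hb, rfl⟩ := lift y hy
  obtain ⟨c, hc, rfl⟩ := lift z hz
  have hallP : ∀ r s, a * r * b * s * c ∈ P := fun r s ↦
    mem_of_map_mem hQ hker (by simpa only [map_mul] using hall (f r) (f s))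
  have hneP : ∃ r s, a * r * b * s * c ≠ 0 := by
    obtain ⟨r, rfl⟩ := hsurj r₀
    obtain ⟨s, rfl⟩ := hsurj s₀
    exact ⟨r, s, fun h ↦ hne (by simp only [← map_mul, h, map_zero])⟩
  have hmap : ∀ u v, u * v ∈ P → f u * f v ∈ Q := fun u v h ↦ (hQ _).mpr ⟨_, h, map_mul f u v⟩
  rcases hPabs a b c ha hb hc hneP hallP with h | h | h
  · exact Or.inl (hmap a b h)
  · exact Or.inr (Or.inl (hmap b c h))
  · exact Or.inr (Or.inr (hmap a c h))
end

section
/- Let f : R → T be a surjective graded homomorphism of G-graded rings. If I is a graded weakly 2-absorbing ideal of T and Ker(f) is a graded weakly 2-absorbing ideal of R, then f⁻¹(I) is a graded weakly 2-absorbing ideal of R. -/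
variable {G R T : Type*} [AddGroup G] [DecidableEq G] [Ring R] [Ring T]

lemma decompose_map_aux (𝒜 : G → AddSubgroup R) [GradedRing 𝒜] (ℬ : G → AddSubgroup T)
    [GradedRing ℬ] (f : R →+* T) (hf : ∀ g : G, ∀ x ∈ 𝒜 g, f x ∈ ℬ g) (a : R) (g : G) :
    f (DirectSum.decompose 𝒜 a g : R) = (DirectSum.decompose ℬ (f a) g : T) := by
  classical
  let φ : T →+ T :=
    { toFun := fun t => (DirectSum.decompose ℬ t g : T)
      map_zero' := by simp
      map_add' := by intro a b; simp }
  have hφ : ∀ t : T, (DirectSum.decompose ℬ t g : T) = φ t := fun _ => rfl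
  conv_rhs => rw [hφ, ← DirectSum.sum_support_decompose 𝒜 a, map_sum, map_sum]
  have hterm : ∀ i ∈ (DirectSum.decompose 𝒜 a).support,
      φ (f (DirectSum.decompose 𝒜 a i : R)) =
        if i = g then f (DirectSum.decompose 𝒜 a i : R) else 0 := by
    intro i _
    have hmem : f (DirectSum.decompose 𝒜 a i : R) ∈ ℬ i :=
      hf i _ (SetLike.coe_mem _)
    by_cases h : i = g
    · subst h
      rw [if_pos rfl]
      exact DirectSum.decompose_of_mem_same ℬ hmem
    · simp only [if_neg h, φ]
      exact DirectSum.decompose_of_mem_ne ℬ hmem h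
  rw [Finset.sum_congr rfl hterm, Finset.sum_ite_eq' _ g]
  by_cases hg : g ∈ (DirectSum.decompose 𝒜 a).support
  · rw [if_pos hg]
  · rw [if_neg hg]
    have : (DirectSum.decompose 𝒜 a g : R) = 0 := by
      rw [DFinsupp.notMem_support_iff] at hg
      simp [hg]
    rw [this, map_zero]

/-- If `f : R → T` is a surjective graded homomorphism, `I` is a graded weakly 2-absorbing
ideal of `T` and `Ker(f)` is a graded weakly 2-absorbing ideal of `R`, then `f⁻¹(I)` is a
graded weakly 2-absorbing ideal of `R`. -/
theorem stmt9 (𝒜 : G → AddSubgroup R) [GradedRing 𝒜] (ℬ : G → AddSubgroup T) [GradedRing ℬ]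
    (f : R →+* T) (hf : ∀ g : G, ∀ x ∈ 𝒜 g, f x ∈ ℬ g) (hsurj : Function.Surjective f)
    (I : TwoSidedIdeal T) (hI : IsGradedWeakly2Absorbing ℬ I)
    (hker : IsGradedWeakly2Absorbing 𝒜 (TwoSidedIdeal.ker f))
    (Pre : TwoSidedIdeal R) (hPre : ∀ x, x ∈ Pre ↔ f x ∈ I) :
    IsGradedWeakly2Absorbing 𝒜 Pre := by
  classical
  obtain ⟨hItop, hIgr, hIabs⟩ := hI
  obtain ⟨_, _, hKabs⟩ := hker
  refine ⟨?_, ?_, ?_⟩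
  · intro h
    apply hItop
    apply TwoSidedIdeal.eq_top
    have h1 : (1 : R) ∈ Pre := h ▸ trivial
    simpa using (hPre 1).mp h1
  · intro a ha g
    rw [hPre] at ha ⊢
    rw [decompose_map_aux 𝒜 ℬ f hf]
    exact hIgr (f a) ha g
  · intro x y z hx hy hz hne hall
    by_cases hT : ∃ r s : T, f x * r * f y * s * f z ≠ 0
    · have hxh : IsHomog ℬ (f x) := ⟨hx.choose, hf _ _ hx.choose_spec⟩
      have hyh : IsHomog ℬ (f y) := ⟨hy.choose, hf _ _ hy.choose_spec⟩
      have hzh : IsHomog ℬ (f z) := ⟨hz.choose, hf _ _ hz.choose_spec⟩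
      have hall' : ∀ r s : T, f x * r * f y * s * f z ∈ I := by
        intro r s
        obtain ⟨r', rfl⟩ := hsurj r
        obtain ⟨s', rfl⟩ := hsurj s
        have := (hPre (x * r' * y * s' * z)).mp (hall r' s')
        simpa [map_mul] using this
      rcases hIabs (f x) (f y) (f z) hxh hyh hzh hT hall' with h | h | h
      · left; rw [hPre, map_mul]; exact h
      · right; left; rw [hPre, map_mul]; exact h
      · right; right; rw [hPre, map_mul]; exact h
    · push_neg at hT
      have hker' : ∀ r s : R, x * r * y * s * z ∈ TwoSidedIdeal.ker f := by
        intro r s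
        rw [TwoSidedIdeal.mem_ker]
        simpa [map_mul] using hT (f r) (f s)
      rcases hKabs x y z hx hy hz hne hker' with h | h | h
      · left; rw [hPre]; rw [TwoSidedIdeal.mem_ker] at h; rw [h]; exact TwoSidedIdeal.zero_mem I
      · right; left; rw [hPre]; rw [TwoSidedIdeal.mem_ker] at h; rw [h]; exact TwoSidedIdeal.zero_mem I
      · right; right; rw [hPre]; rw [TwoSidedIdeal.mem_ker] at h; rw [h]; exact TwoSidedIdeal.zero_mem I
end
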